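/- arXiv:2006.13550 — 2 statements merged into one kernel-verified Lean document; each statement's English description precedes it below -/
import Mathlib

section
/- Let $R$ be a commutative ring in which $p$ is nilpotent, $W(R)$ the $p$-typical Witt vectors, $F$ and $V$ the Frobenius and Verschiebung, and $I_n := V^n(W(R))$. Suppose $P$ is a $W(R)$-module and $F_1 : I_1 P \to P$ is an additive bijection with $F_1(V(\xi)x) = \xi F_0(x)$ for a bijective Frobenius-semilinear $F_0: P \to P$. Then for every $n \geq 1$ the map $F_1$ restricts to a bijection $I_n P \to I_{n-1} P$, and hence induces bijections $I_n P / I_{n+1} P \to I_{n-1} P / I_n P$ for all $n \geq 1$. -/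
/-- For a `W(R)`-module `P` (with `p` nilpotent in `R`) with a bijective
divided Frobenius `F₁ : I₁P → P` satisfying `F₁(V(ξ)x) = ξF₀(x)` for a
bijective Frobenius-semilinear `F₀`, the map `F₁` restricts to a bijection
`IₙP → Iₙ₋₁P` for every `n ≥ 1`, and induces bijections
`IₙP/Iₙ₊₁P → Iₙ₋₁P/IₙP`. -/
theorem divided_frobenius_restricts_to_bijection (p : ℕ) [Fact p.Prime]
    (R : Type*) [CommRing R] (hnil : ∃ m : ℕ, (p : R) ^ m = 0)
    (P : Type*) [AddCommGroup P] [Module (WittVector p R) P]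
    (NP : ℕ → Submodule (WittVector p R) P)
    (hNP : ∀ n, NP n = (Ideal.span (Set.range
        ((fun x : WittVector p R => WittVector.verschiebung x)^[n]))) •
        (⊤ : Submodule (WittVector p R) P))
    (F₀ : P →+ P) (hF₀bij : Function.Bijective F₀)
    (hF₀ : ∀ (ξ : WittVector p R) (x : P),
      F₀ (ξ • x) = WittVector.frobenius ξ • F₀ x)
    (F₁ : NP 1 →+ P) (hF₁bij : Function.Bijective F₁)
    (hF₁ : ∀ (ξ : WittVector p R) (x : P)
        (h : WittVector.verschiebung ξ • x ∈ NP 1),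
      F₁ ⟨WittVector.verschiebung ξ • x, h⟩ = ξ • F₀ x) :
    ∀ n : ℕ, 1 ≤ n →
      (Set.BijOn (fun y : NP 1 => F₁ y) {y : NP 1 | (y : P) ∈ NP n}
        {z : P | z ∈ NP (n - 1)}) ∧
      (∀ y₁ y₂ : NP 1, (y₁ : P) ∈ NP n → (y₂ : P) ∈ NP n →
        F₁ y₁ - F₁ y₂ ∈ NP n → (y₁ : P) - (y₂ : P) ∈ NP (n + 1)) ∧
      (∀ z ∈ NP (n - 1), ∃ y : NP 1, (y : P) ∈ NP n ∧ F₁ y - z ∈ NP n) := by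
  classical
  set Vf : WittVector p R → WittVector p R :=
    fun x => WittVector.verschiebung x with hVf
  -- F₁ applied to equal underlying elements gives equal values
  have Fcongr : ∀ (w w' : P) (h : w ∈ NP 1) (h' : w' ∈ NP 1), w = w' →
      F₁ ⟨w, h⟩ = F₁ ⟨w', h'⟩ := by
    intro w w' h h' e; subst e; rfl
  have hmem : ∀ (k : ℕ) (ξ : WittVector p R) (x : P), (Vf^[k] ξ) • x ∈ NP k := by
    intro k ξ x
    rw [hNP]
    exact Submodule.smul_mem_smul (Ideal.subset_span ⟨ξ, rfl⟩) Submodule.mem_top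
  have hle : ∀ k : ℕ, NP (k + 1) ≤ NP 1 := by
    intro k
    rw [hNP (k + 1), hNP 1]
    refine Submodule.smul_mono_left (Ideal.span_mono ?_)
    rintro _ ⟨ξ, rfl⟩
    exact ⟨Vf^[k] ξ, by simp [Function.iterate_succ_apply']⟩
  -- F₁ maps NP (k+1) into NP k
  have keyA : ∀ (k : ℕ) (w : P), w ∈ NP (k + 1) →
      ∃ h : w ∈ NP 1, F₁ ⟨w, h⟩ ∈ NP k := by
    intro k w hw
    rw [hNP (k + 1)] at hw
    have hq : ∀ r ∈ Ideal.span (Set.range (Vf^[k + 1])), ∀ x : P,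
        ∃ h : r • x ∈ NP 1, F₁ ⟨r • x, h⟩ ∈ NP k := by
      intro r hr
      induction hr using Submodule.span_induction with
      | mem a ha =>
        obtain ⟨ξ, rfl⟩ := ha
        intro x
        have h1 : (Vf^[k + 1] ξ) • x ∈ NP 1 := hle k (hmem (k + 1) ξ x)
        refine ⟨h1, ?_⟩
        have e : (Vf^[k + 1] ξ) • x = WittVector.verschiebung (Vf^[k] ξ) • x := by
          rw [Function.iterate_succ_apply']
        have h2 : WittVector.verschiebung (Vf^[k] ξ) • x ∈ NP 1 := e ▸ h1
        rw [Fcongr _ _ h1 h2 e, hF₁ _ _ h2]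
        exact hmem k ξ (F₀ x)
      | zero =>
        intro x
        have h1 : (0 : WittVector p R) • x ∈ NP 1 := by
          rw [zero_smul]; exact (NP 1).zero_mem
        refine ⟨h1, ?_⟩
        rw [show ((⟨(0 : WittVector p R) • x, h1⟩ : NP 1)) = 0 from
          Subtype.ext (zero_smul _ x), map_zero]
        exact (NP k).zero_mem
      | add a b _ _ iha ihb =>
        intro x
        obtain ⟨h1, H1⟩ := iha x
        obtain ⟨h2, H2⟩ := ihb x
        have hsum : (a + b) • x ∈ NP 1 := by rw [add_smul]; exact add_mem h1 h2
        refine ⟨hsum, ?_⟩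
        rw [show ((⟨(a + b) • x, hsum⟩ : NP 1)) = ⟨a • x, h1⟩ + ⟨b • x, h2⟩ from
          Subtype.ext (add_smul a b x), map_add]
        exact add_mem H1 H2
      | smul c a _ ih =>
        intro x
        obtain ⟨h1, H1⟩ := ih (c • x)
        have e : (c • a) • x = a • (c • x) := by
          rw [smul_eq_mul, mul_comm, mul_smul]
        have h2 : (c • a) • x ∈ NP 1 := by rw [e]; exact h1
        refine ⟨h2, ?_⟩
        rw [Fcongr _ _ h2 h1 e]
        exact H1
    refine Submodule.smul_induction_on hw ?_ ?_
    · intro r hr x _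
      exact hq r hr x
    · intro x y hx hy
      obtain ⟨h1, H1⟩ := hx
      obtain ⟨h2, H2⟩ := hy
      refine ⟨add_mem h1 h2, ?_⟩
      rw [show ((⟨x + y, add_mem h1 h2⟩ : NP 1)) = ⟨x, h1⟩ + ⟨y, h2⟩ from rfl,
        map_add]
      exact add_mem H1 H2
  -- every element of NP k is F₁ of an element of NP (k+1)
  have keyB : ∀ (k : ℕ) (z : P), z ∈ NP k →
      ∃ (w : P) (h : w ∈ NP 1), w ∈ NP (k + 1) ∧ F₁ ⟨w, h⟩ = z := by
    intro k z hz
    rw [hNP k] at hz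
    have hq : ∀ r ∈ Ideal.span (Set.range (Vf^[k])), ∀ x : P,
        ∃ (w : P) (h : w ∈ NP 1), w ∈ NP (k + 1) ∧ F₁ ⟨w, h⟩ = r • x := by
      intro r hr
      induction hr using Submodule.span_induction with
      | mem a ha =>
        obtain ⟨ξ, rfl⟩ := ha
        intro x
        obtain ⟨x', rfl⟩ := hF₀bij.2 x
        have h1 : (Vf^[k + 1] ξ) • x' ∈ NP 1 := hle k (hmem (k + 1) ξ x')
        refine ⟨(Vf^[k + 1] ξ) • x', h1, hmem (k + 1) ξ x', ?_⟩
        have e : (Vf^[k + 1] ξ) • x' = WittVector.verschiebung (Vf^[k] ξ) • x' := by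
          rw [Function.iterate_succ_apply']
        have h2 : WittVector.verschiebung (Vf^[k] ξ) • x' ∈ NP 1 := e ▸ h1
        rw [Fcongr _ _ h1 h2 e, hF₁ _ _ h2]
      | zero =>
        intro x
        refine ⟨0, (NP 1).zero_mem, (NP (k + 1)).zero_mem, ?_⟩
        rw [show ((⟨(0 : P), (NP 1).zero_mem⟩ : NP 1)) = 0 from rfl, map_zero,
          zero_smul]
      | add a b _ _ iha ihb =>
        intro x
        obtain ⟨w1, h1, m1, e1⟩ := iha x
        obtain ⟨w2, h2, m2, e2⟩ := ihb x
        refine ⟨w1 + w2, add_mem h1 h2, add_mem m1 m2, ?_⟩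
        rw [show ((⟨w1 + w2, add_mem h1 h2⟩ : NP 1)) = ⟨w1, h1⟩ + ⟨w2, h2⟩ from rfl,
          map_add, e1, e2, add_smul]
      | smul c a _ ih =>
        intro x
        obtain ⟨w, h, m, e⟩ := ih (c • x)
        exact ⟨w, h, m, by rw [e, smul_eq_mul, mul_comm, mul_smul]⟩
    refine Submodule.smul_induction_on hz ?_ ?_
    · intro r hr x _
      exact hq r hr x
    · intro x y hx hy
      obtain ⟨w1, h1, m1, e1⟩ := hx
      obtain ⟨w2, h2, m2, e2⟩ := hy
      refine ⟨w1 + w2, add_mem h1 h2, add_mem m1 m2, ?_⟩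
      rw [show ((⟨w1 + w2, add_mem h1 h2⟩ : NP 1)) = ⟨w1, h1⟩ + ⟨w2, h2⟩ from rfl,
        map_add, e1, e2]
  intro n hn
  obtain ⟨m, rfl⟩ : ∃ m, n = m + 1 := ⟨n - 1, by omega⟩
  refine ⟨⟨?_, fun y₁ _ y₂ _ h => hF₁bij.1 h, ?_⟩, ?_, ?_⟩
  · -- MapsTo
    intro y hy
    obtain ⟨h, H⟩ := keyA m (y : P) hy
    have : F₁ y = F₁ ⟨(y : P), h⟩ := Fcongr _ _ y.2 h rfl
    show F₁ y ∈ NP (m + 1 - 1)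
    rw [this]
    exact H
  · -- SurjOn
    intro z hz
    obtain ⟨w, h, hm, e⟩ := keyB m z hz
    exact ⟨⟨w, h⟩, hm, e⟩
  · -- injectivity mod NP (n+1)
    intro y₁ y₂ _ _ hd
    have hd' : F₁ (y₁ - y₂) ∈ NP (m + 1) := by rw [map_sub]; exact hd
    obtain ⟨w, h, hm, e⟩ := keyB (m + 1) _ hd'
    have e2 : (⟨w, h⟩ : NP 1) = y₁ - y₂ := hF₁bij.1 e
    have : ((y₁ - y₂ : NP 1) : P) ∈ NP (m + 1 + 1) := by
      rw [← e2]; exact hm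
    simpa using this
  · -- surjectivity mod NP n
    intro z hz
    obtain ⟨w, h, hm, e⟩ := keyB m z hz
    exact ⟨⟨w, h⟩, hm, by rw [e, sub_self]; exact (NP (m + 1)).zero_mem⟩
end

section
/- Let $A$ be a commutative ring, $M$ a module with a finite increasing filtration $0 = U_{-1} \subseteq U_0 \subseteq \cdots \subseteq U_n = M$ by submodules such that each quotient $U_i/U_{i-1}$ is projective, and suppose given a decreasing filtration $\mathrm{Fil}^{\bullet} M$ opposite to $U_{\bullet}$, meaning $M = U_i \oplus \mathrm{Fil}^{i+1} M$ for all $i$. Then each inclusion $U_i \hookrightarrow M$ is split, and $M \cong \bigoplus_{i=0}^n (U_i \cap \mathrm{Fil}^i M)$ as $A$-modules. -/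
/-!
Index the increasing filtration from `u 0 = U₋₁ = ⊥`, so that `u k` is complementary to `Filᵏ`.
By modularity `u (k+1) = u k ⊔ (u (k+1) ⊓ Filᵏ)`, and the new piece `u (k+1) ⊓ Filᵏ ≤ Filᵏ` is
disjoint from `u k`, which is the sup of the earlier pieces. Induction on `k` therefore shows that
the pieces `Uₖ ⊓ Filᵏ` are independent with sup `Uₙ = M`.
-/

section OppositeFiltration

variable {α : Type*} [Lattice α] [IsModularLattice α] [BoundedOrder α] {u f : ℕ → α} {m : ℕ}

theorem sup_inf_eq_of_le_of_codisjoint {a b c : α} (hab : a ≤ b) (hac : Codisjoint a c) :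
    a ⊔ b ⊓ c = b := by
  rw [inf_comm, ← sup_inf_assoc_of_le c hab, hac.eq_top, top_inf_eq]

theorem sup_range_inf_succ_eq (h0 : u 0 = ⊥) (hmono : ∀ k < m, u k ≤ u (k + 1))
    (hcodisj : ∀ k < m, Codisjoint (u k) (f k)) :
    (Finset.range m).sup (fun k => u (k + 1) ⊓ f k) = u m := by
  induction m with
  | zero => simp [h0]
  | succ m ih =>
    rw [Finset.range_add_one, Finset.sup_insert,
      ih (fun k hk => hmono k (by omega)) (fun k hk => hcodisj k (by omega)), sup_comm]
    exact sup_inf_eq_of_le_of_codisjoint (hmono m m.lt_succ_self) (hcodisj m m.lt_succ_self)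

theorem supIndep_range_inf_succ (h0 : u 0 = ⊥) (hmono : ∀ k < m, u k ≤ u (k + 1))
    (hcompl : ∀ k < m, IsCompl (u k) (f k)) :
    (Finset.range m).SupIndep (fun k => u (k + 1) ⊓ f k) := by
  classical
  induction m with
  | zero => simp
  | succ m ih =>
    rw [Finset.range_add_one]
    refine (ih (fun k hk => hmono k (by omega)) (fun k hk => hcompl k (by omega))).insert ?_
    rw [sup_range_inf_succ_eq h0 (fun k hk => hmono k (by omega))
      (fun k hk => (hcompl k (by omega)).codisjoint)]
    exact (hcompl m m.lt_succ_self).disjoint.symm.mono_left inf_le_right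

end OppositeFiltration

theorem DirectSum.isInternal_fin_of_supIndep_range {R M : Type*} [Ring R] [AddCommGroup M]
    [Module R M] {p : ℕ → Submodule R M} {m : ℕ} (hind : (Finset.range m).SupIndep p)
    (hsup : (Finset.range m).sup p = ⊤) :
    DirectSum.IsInternal (fun i : Fin m => p i) := by
  refine (DirectSum.isInternal_submodule_iff_iSupIndep_and_iSup_eq_top _).mpr ⟨?_, ?_⟩
  · rw [iSupIndep_iff_supIndep_univ]
    exact (Finset.supIndep_map (g := Fin.valEmbedding)).mp (by simpa [Nat.Iio_eq_range] using hind)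
  · rw [← Finset.sup_univ_eq_iSup, ← hsup, ← Nat.Iio_eq_range, ← Fin.map_valEmbedding_univ,
      Finset.sup_map]
    rfl

theorem opposite_filtration_module_splitting_general (A M : Type*) [CommRing A]
    [AddCommGroup M] [Module A M] (n : ℕ)
    (U Fil : ℤ → Submodule A M)
    (hUbot : U (-1) = ⊥) (hUtop : U (n : ℤ) = ⊤)
    (hUmono : ∀ i : ℤ, -1 ≤ i → i < (n : ℤ) → U i ≤ U (i + 1))
    (hopp : ∀ i : ℤ, -1 ≤ i → i ≤ (n : ℤ) → IsCompl (U i) (Fil (i + 1))) :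
    (∀ i : ℤ, 0 ≤ i → i ≤ (n : ℤ) → ∃ N : Submodule A M, IsCompl (U i) N) ∧
    DirectSum.IsInternal (fun i : Fin (n + 1) =>
      U ((i : ℕ) : ℤ) ⊓ Fil ((i : ℕ) : ℤ)) := by
  refine ⟨fun i hi hin => ⟨_, hopp i (by omega) hin⟩, ?_⟩
  set u : ℕ → Submodule A M := fun k => U ((k : ℤ) - 1)
  have h0 : u 0 = ⊥ := by simpa [u] using hUbot
  have hmono : ∀ k < n + 1, u k ≤ u (k + 1) := fun k hk => by
    simpa [u] using hUmono ((k : ℤ) - 1) (by omega) (by omega)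
  have hcompl : ∀ k < n + 1, IsCompl (u k) (Fil k) := fun k hk => by
    simpa [u] using hopp ((k : ℤ) - 1) (by omega) (by omega)
  have hpieces : (fun k : ℕ => u (k + 1) ⊓ Fil k) = fun k : ℕ => U k ⊓ Fil k := by
    funext k; simp [u]
  refine DirectSum.isInternal_fin_of_supIndep_range (p := fun k : ℕ => U k ⊓ Fil k) ?_ ?_
  · simpa [hpieces] using supIndep_range_inf_succ h0 hmono hcompl
  · rw [← hpieces, sup_range_inf_succ_eq h0 hmono fun k hk => (hcompl k hk).codisjoint]
    simpa [u] using hUtop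

/-- A finite increasing filtration `0 = U₋₁ ⊆ U₀ ⊆ ⋯ ⊆ Uₙ = M` with projective
graded pieces, together with an opposite decreasing filtration `Fil`, splits:
each `Uᵢ` is a direct summand and `M = ⊕ᵢ (Uᵢ ⊓ Filⁱ)`. -/
theorem opposite_filtration_module_splitting (A M : Type*) [CommRing A]
    [AddCommGroup M] [Module A M] (n : ℕ)
    (U Fil : ℤ → Submodule A M)
    (hUbot : U (-1) = ⊥) (hUtop : U (n : ℤ) = ⊤)
    (hUmono : ∀ i : ℤ, -1 ≤ i → i < (n : ℤ) → U i ≤ U (i + 1))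
    (hproj : ∀ i : ℤ, 0 ≤ i → i ≤ (n : ℤ) →
      Module.Projective A
        (↥(U i) ⧸ (Submodule.comap (U i).subtype (U (i - 1)))))
    (hopp : ∀ i : ℤ, -1 ≤ i → i ≤ (n : ℤ) → IsCompl (U i) (Fil (i + 1))) :
    (∀ i : ℤ, 0 ≤ i → i ≤ (n : ℤ) → ∃ N : Submodule A M, IsCompl (U i) N) ∧
    DirectSum.IsInternal (fun i : Fin (n + 1) =>
      U ((i : ℕ) : ℤ) ⊓ Fil ((i : ℕ) : ℤ)) :=
  opposite_filtration_module_splitting_general A M n U Fil hUbot hUtop hUmono hopp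
end
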